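/- Let T be a rooted tree (the support tree) whose nodes t are assigned pairwise disjoint vertex sets V_t partitioning V(G), such that whenever two vertices v ∈ V_t and v' ∈ V_{t'} with t ≠ t' are adjacent in G, either t is the parent of t' or t' is the parent of t. Suppose for each node t we have a tree decomposition 𝒯_t of the induced subgraph G[V_t] of width at most w, with the property that for each child s of t there is a bag of 𝒯_t containing all vertices of V_t adjacent to V_s. Then G has a tree decomposition of width at most 2w + 1, obtained by attaching the root of each 𝒯_s to the corresponding bag (portal) of 𝒯_t and taking each bag of 𝒯_s unioned with the portal's bag. -/

import Mathlib

/-- A tree decomposition of a graph `G`: a tree `T` whose nodes carry bags of vertices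
of `G`, such that every edge of `G` is contained in some bag and, for every vertex, the
set of nodes whose bags contain it induces a connected (in particular nonempty)
subgraph of `T`. -/
structure TreeDecomp {V : Type} (G : SimpleGraph V) where
  ι : Type
  T : SimpleGraph ι
  connT : T.Connected
  acyclicT : T.IsAcyclic
  bag : ι → Set V
  edgeCover : ∀ ⦃u v : V⦄, G.Adj u v → ∃ t, u ∈ bag t ∧ v ∈ bag t
  bagConn : ∀ v : V, (T.induce {t | v ∈ bag t}).Connected



open SimpleGraph

variable {α : Type}

/-- The graph on `α` induced by a parent function `P`. -/
def pGraph (P : α → α) : SimpleGraph α := SimpleGraph.fromRel (fun a b => P a = b)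

lemma pGraph_adj (P : α → α) (a b : α) :
    (pGraph P).Adj a b ↔ a ≠ b ∧ (P a = b ∨ P b = a) := SimpleGraph.fromRel_adj _ a b

lemma pGraph_reach (P : α → α) (R : α) :
    ∀ n x, P^[n] x = R → (pGraph P).Reachable x R := by
  intro n
  induction n with
  | zero => intro x hx; exact hx ▸ Reachable.refl x
  | succ n ih =>
    intro x hx
    by_cases hxR : x = R
    · subst hxR; exact Reachable.refl _
    · have hne : x ≠ P x := by
        intro h
        apply hxR
        rw [← hx, Function.iterate_fixed h.symm (n+1)]
      have hadj : (pGraph P).Adj x (P x) := (pGraph_adj P _ _).2 ⟨hne, Or.inl rfl⟩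
      exact hadj.reachable.trans (ih (P x) (by rwa [← Function.iterate_succ_apply]))

lemma pGraph_connected (P : α → α) (R : α)
    (hreach : ∀ x, ∃ n, P^[n] x = R) : (pGraph P).Connected := by
  rw [connected_iff]
  refine ⟨fun x y => ?_, ⟨R⟩⟩
  obtain ⟨n, hn⟩ := hreach x
  obtain ⟨m, hm⟩ := hreach y
  exact (pGraph_reach P R n x hn).trans (pGraph_reach P R m y hm).symm

lemma pGraph_walk_edge (P : α → α) (R : α) (hR : P R = R)
    (hreach : ∀ x, ∃ n, P^[n] x = R) {v w : α} (hvw : v ≠ w) (hPv : P v = w)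
    (q : (pGraph P).Walk v w) : s(v, w) ∈ q.edges := by
  have hvR : v ≠ R := by rintro rfl; rw [hR] at hPv; exact hvw hPv
  have hvS : v ∈ {x | ∃ n, P^[n] x = v} := ⟨0, rfl⟩
  have hwS : w ∉ {x | ∃ n, P^[n] x = v} := by
    rintro ⟨n, hn⟩
    have hcyc : ∀ k, P^[k * (n+1)] v = v := by
      intro k
      induction k with
      | zero => simp
      | succ k ih =>
        rw [Nat.succ_mul, Function.iterate_add_apply, Function.iterate_succ_apply, hPv, hn, ih]
    obtain ⟨m, hm⟩ := hreach v
    have hm' : m ≤ m * (n+1) := Nat.le_mul_of_pos_right m (Nat.succ_pos n)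
    have hR' : P^[m * (n+1)] v = R := by
      rw [← Nat.sub_add_cancel hm', Function.iterate_add_apply, hm, Function.iterate_fixed hR]
    exact hvR ((hcyc m).symm.trans hR')
  obtain ⟨d, hd, hdf, hds⟩ := q.exists_boundary_dart _ hvS hwS
  have hadj := (pGraph_adj P _ _).1 d.adj
  have hP : P d.fst = d.snd := by
    rcases hadj.2 with h | h
    · exact h
    · exact absurd ⟨_, by rw [Function.iterate_succ_apply, h]; exact hdf.choose_spec⟩ hds
  obtain ⟨n, hn⟩ := hdf
  cases n with
  | zero =>
    have h1 : d.fst = v := hn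
    have h2 : d.snd = w := by rw [← hP, h1, hPv]
    have he : d.edge = s(v, w) := by
      have : d.edge = s(d.fst, d.snd) := rfl
      rw [this, h1, h2]
    rw [← he]
    exact List.mem_map_of_mem hd
  | succ n =>
    rw [Function.iterate_succ_apply, hP] at hn
    exact absurd ⟨n, hn⟩ hds

lemma pGraph_acyclic (P : α → α) (R : α) (hR : P R = R)
    (hreach : ∀ x, ∃ n, P^[n] x = R) : (pGraph P).IsAcyclic := by
  rw [isAcyclic_iff_forall_adj_isBridge]
  intro v w hadj
  rw [isBridge_iff_adj_and_forall_walk_mem_edges]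
  intro q
  obtain ⟨hne, h | h⟩ := (pGraph_adj P _ _).1 hadj
  · exact pGraph_walk_edge P R hR hreach hne h q
  · have := pGraph_walk_edge P R hR hreach (Ne.symm hne) h q.reverse
    rw [Walk.edges_reverse, List.mem_reverse, Sym2.eq_swap] at this
    exact this


lemma exists_parent (T : SimpleGraph α) (hc : T.Connected) (ha : T.IsAcyclic) :
    ∃ (r : α) (p : α → α), p r = r ∧ (∀ x, ∃ n, p^[n] x = r) ∧
      (∀ x y, T.Adj x y → p x = y ∨ p y = x) := by
  classical
  obtain ⟨r⟩ := hc.nonempty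
  let pa : ∀ x : α, T.Path x r := fun x => ((hc.preconnected x r).some).toPath
  have uniq : ∀ (x : α) (q : T.Walk x r), q.IsPath → q = (pa x).val :=
    fun x q hq => congrArg Subtype.val (ha.path_unique ⟨q, hq⟩ (pa x))
  let p : α → α := fun x => (pa x).val.getVert 1
  have hnil : (pa r).val = Walk.nil := (uniq r Walk.nil (Walk.IsPath.nil)).symm
  have hpr : p r = r := by
    show (pa r).val.getVert 1 = r
    rw [hnil]
    rfl
  -- decomposition of the path from a non-root vertex
  have hcons : ∀ x, x ≠ r → ∃ (y : α) (h : T.Adj x y),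
      (pa x).val = Walk.cons h (pa y).val ∧ p x = y := by
    intro x hx
    have hnn : ¬ (pa x).val.Nil := Walk.not_nil_of_ne hx
    obtain ⟨y, h, q, hq⟩ := Walk.not_nil_iff.1 hnn
    have hqp : q.IsPath := by
      have := (pa x).property
      rw [hq] at this
      exact this.of_cons
    have hqe : q = (pa y).val := uniq y q hqp
    refine ⟨y, h, by rw [hq, hqe], ?_⟩
    show (pa x).val.getVert 1 = y
    rw [hq, Walk.getVert_cons_succ, Walk.getVert_zero]
  -- iteration reaches the root
  have hiter : ∀ (n : ℕ) (x : α), (pa x).val.length = n → p^[n] x = r := by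
    intro n
    induction n with
    | zero => intro x hx; exact Walk.eq_of_length_eq_zero hx
    | succ n ih =>
      intro x hx
      have hxr : x ≠ r := by
        rintro rfl
        rw [hnil] at hx
        simp at hx
      obtain ⟨y, h, hdec, hpx⟩ := hcons x hxr
      have hlen : (pa y).val.length = n := by
        rw [hdec] at hx
        simpa using hx
      rw [Function.iterate_succ_apply, hpx]
      exact ih y hlen
  refine ⟨r, p, hpr, fun x => ⟨(pa x).val.length, hiter _ x rfl⟩, ?_⟩
  intro x y hadj
  by_cases hmem : x ∈ (pa y).val.support
  · right
    have hyr : y ≠ r := by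
      rintro rfl
      rw [hnil] at hmem
      simp at hmem
      exact hadj.ne hmem
    obtain ⟨z, h, hdec, hpy⟩ := hcons y hyr
    -- the unique path from y to x is the single edge, so z = x
    have htake : ((pa y).val.takeUntil x hmem).IsPath := (pa y).property.takeUntil _
    have hsingle : (Walk.cons hadj.symm Walk.nil : T.Walk y x).IsPath := by
      simp [Walk.cons_isPath_iff, hadj.ne']
    have := ha.path_unique ⟨(pa y).val.takeUntil x hmem, htake⟩ ⟨Walk.cons hadj.symm Walk.nil, hsingle⟩
    have htu : (pa y).val.takeUntil x hmem = Walk.cons hadj.symm Walk.nil :=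
      congrArg Subtype.val this
    have hspec := Walk.take_spec (pa y).val hmem
    rw [htu] at hspec
    -- (pa y).val = cons _ (nil.append drop) = cons _ drop
    rw [hpy]
    have : (pa y).val.getVert 1 = x := by
      rw [← hspec]
      simp [Walk.getVert_cons_succ]
    rw [← hpy]
    exact this ▸ rfl
  · left
    have hpath : (Walk.cons hadj (pa y).val).IsPath := by
      rw [Walk.cons_isPath_iff]
      exact ⟨(pa y).property, hmem⟩
    have := uniq x _ hpath
    show (pa x).val.getVert 1 = y
    rw [← this, Walk.getVert_cons_succ, Walk.getVert_zero]

lemma sigma_snd_eq {ι : Type} {β : ι → Type} {t : ι} {a b : β t}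
    (h : (⟨t, a⟩ : Σ t, β t) = ⟨t, b⟩) : a = b := by
  simpa using h

/-- Let `T_supp` be a rooted tree (given by `parent` and `root`) whose
nodes `t` carry pairwise disjoint sets `Vt t` partitioning `V(G)`, such that vertices in
`Vt t` and `Vt t'` (for `t ≠ t'`) can be adjacent only if one of `t, t'` is the parent of
the other. Suppose each `G[Vt t]` has a tree decomposition `D t` of width at most `w`
such that for each child `s` of `t` some bag of `D t` (a portal) contains all vertices
of `Vt t` adjacent to `Vt s`. Then `G` has a tree decomposition of width at most
`2w + 1` (i.e., all bags of size at most `2w + 2`). -/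
theorem stmt_8 {V ι : Type} (G : SimpleGraph V) (Vt : ι → Set V)
    (root : ι) (parent : ι → ι)
    (hroot : parent root = root)
    (htree : ∀ t, ∃ n, parent^[n] t = root)
    (hdisj : Pairwise (Function.onFun Disjoint Vt))
    (hcover : ∀ v : V, ∃ t, v ∈ Vt t)
    (hadj : ∀ u v t t', G.Adj u v → u ∈ Vt t → v ∈ Vt t' → t ≠ t' →
      parent t = t' ∨ parent t' = t)
    (w : ℕ)
    (D : ∀ t, TreeDecomp (G.induce (Vt t)))
    (hwidth : ∀ t, ∀ i : (D t).ι, ((D t).bag i).ncard ≤ w + 1)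
    (hportal : ∀ s, s ≠ root → ∃ i : (D (parent s)).ι,
      ∀ v (hv : v ∈ Vt (parent s)), (∃ v' ∈ Vt s, G.Adj v v') →
        (⟨v, hv⟩ : ↑(Vt (parent s))) ∈ (D (parent s)).bag i) :
    ∃ TD : TreeDecomp G, ∀ i : TD.ι, (TD.bag i).ncard ≤ 2 * w + 2 := by
  classical
  choose r p hpr hreach hTadj using fun t => exists_parent (D t).T (D t).connT (D t).acyclicT
  set pt : ∀ s, s ≠ root → (D (parent s)).ι := fun s hs => (hportal s hs).choose with hptdef
  have hpt : ∀ (s) (hs : s ≠ root) (v) (hv : v ∈ Vt (parent s)),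
      (∃ v' ∈ Vt s, G.Adj v v') →
      (⟨v, hv⟩ : ↑(Vt (parent s))) ∈ (D (parent s)).bag (pt s hs) :=
    fun s hs => (hportal s hs).choose_spec
  set P : (Σ t, (D t).ι) → Σ t, (D t).ι := fun a =>
    if h : a.2 = r a.1 then
      if h2 : a.1 = root then a else ⟨parent a.1, pt a.1 h2⟩
    else ⟨a.1, p a.1 a.2⟩ with hPdef
  set R : Σ t, (D t).ι := ⟨root, r root⟩ with hRdef
  have hPstep : ∀ (t) (i : (D t).ι), i ≠ r t → P ⟨t, i⟩ = ⟨t, p t i⟩ := by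
    intro t i h
    rw [hPdef]
    exact dif_neg h
  have hPup : ∀ (t) (ht : t ≠ root), P ⟨t, r t⟩ = ⟨parent t, pt t ht⟩ := by
    intro t ht
    rw [hPdef]
    simp [ht]
  have hPR : P R = R := by
    rw [hPdef, hRdef]
    simp
  have huniq : ∀ {v : V} {t t' : ι}, v ∈ Vt t → v ∈ Vt t' → t = t' := by
    intro v t t' h1 h2
    by_contra hne
    exact Set.disjoint_left.mp (hdisj hne) h1 h2
  have hparent_ne : ∀ t, t ≠ root → parent t ≠ t := by
    intro t ht heq
    obtain ⟨n, hn⟩ := htree t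
    rw [Function.iterate_fixed heq] at hn
    exact ht hn
  -- reachability of the global parent map
  have hreach1 : ∀ (t) (n) (i : (D t).ι), (p t)^[n] i = r t →
      ∃ m, P^[m] ⟨t, i⟩ = (⟨t, r t⟩ : Σ t, (D t).ι) := by
    intro t n
    induction n with
    | zero =>
      intro i hi
      simp only [Function.iterate_zero_apply] at hi
      subst hi
      exact ⟨0, rfl⟩
    | succ n ih =>
      intro i hi
      by_cases h : i = r t
      · subst h; exact ⟨0, rfl⟩
      · obtain ⟨m, hm⟩ := ih (p t i) (by rwa [← Function.iterate_succ_apply])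
        exact ⟨m + 1, by rw [Function.iterate_succ_apply, hPstep t i h, hm]⟩
  have hreach2 : ∀ (n) (t), parent^[n] t = root → ∀ i : (D t).ι, ∃ m, P^[m] ⟨t, i⟩ = R := by
    intro n
    induction n with
    | zero =>
      intro t ht i
      simp only [Function.iterate_zero_apply] at ht
      subst ht
      obtain ⟨n', hn'⟩ := hreach t i
      obtain ⟨m, hm⟩ := hreach1 t n' i hn'
      exact ⟨m, hm⟩
    | succ n ih =>
      intro t ht i
      by_cases hr' : t = root
      · subst hr'
        obtain ⟨n', hn'⟩ := hreach t i
        obtain ⟨m, hm⟩ := hreach1 t n' i hn'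
        exact ⟨m, hm⟩
      · obtain ⟨n', hn'⟩ := hreach t i
        obtain ⟨m1, hm1⟩ := hreach1 t n' i hn'
        obtain ⟨m2, hm2⟩ := ih (parent t) (by rwa [Function.iterate_succ_apply] at ht) (pt t hr')
        refine ⟨m2 + 1 + m1, ?_⟩
        rw [Function.iterate_add_apply, hm1, Function.iterate_add_apply,
          Function.iterate_one, hPup t hr', hm2]
  have hreachP : ∀ a : Σ t, (D t).ι, ∃ m, P^[m] a = R := by
    rintro ⟨t, i⟩
    obtain ⟨n, hn⟩ := htree t
    exact hreach2 n t hn i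
  -- the glued graph and bags
  set T' : SimpleGraph (Σ t, (D t).ι) := pGraph P with hT'def
  set B : (Σ t, (D t).ι) → Set V := fun a =>
    (Subtype.val '' ((D a.1).bag a.2)) ∪
      (if h : a.1 = root then (∅ : Set V) else Subtype.val '' ((D (parent a.1)).bag (pt a.1 h)))
    with hBdef
  have hBwidth : ∀ a, (B a).ncard ≤ 2 * w + 2 := by
    intro a
    rw [hBdef]
    refine le_trans (Set.ncard_union_le _ _) ?_
    have h1 : (Subtype.val '' ((D a.1).bag a.2)).ncard ≤ w + 1 := by
      rw [Set.ncard_image_of_injective _ Subtype.val_injective]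
      exact hwidth _ _
    have h2 : (if h : a.1 = root then (∅ : Set V)
        else Subtype.val '' ((D (parent a.1)).bag (pt a.1 h))).ncard ≤ w + 1 := by
      split_ifs with h
      · simp
      · rw [Set.ncard_image_of_injective _ Subtype.val_injective]
        exact hwidth _ _
    omega
  -- edge cover
  have key : ∀ (s : ι) (x y : V), G.Adj x y → x ∈ Vt s → s ≠ root → y ∈ Vt (parent s) →
      ∃ a, x ∈ B a ∧ y ∈ B a := by
    intro s x y hxy hx hs hy
    have hybag := hpt s hs y hy ⟨x, hx, hxy.symm⟩
    obtain ⟨⟨j, hj⟩⟩ := ((D s).bagConn ⟨x, hx⟩).nonempty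
    refine ⟨⟨s, j⟩, Set.mem_union_left _ ⟨_, hj, rfl⟩, Set.mem_union_right _ ?_⟩
    rw [dif_neg hs]
    exact ⟨⟨y, hy⟩, hybag, rfl⟩
  have hcoverB : ∀ ⦃u v' : V⦄, G.Adj u v' → ∃ a, u ∈ B a ∧ v' ∈ B a := by
    intro u v' huv
    obtain ⟨tu, hu⟩ := hcover u
    obtain ⟨tv, hv⟩ := hcover v'
    by_cases h : tu = tv
    · subst h
      have hadj' : (G.induce (Vt tu)).Adj ⟨u, hu⟩ ⟨v', hv⟩ := huv
      obtain ⟨i, h1, h2⟩ := (D tu).edgeCover hadj'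
      exact ⟨⟨tu, i⟩, Set.mem_union_left _ ⟨_, h1, rfl⟩, Set.mem_union_left _ ⟨_, h2, rfl⟩⟩
    · rcases hadj u v' tu tv huv hu hv h with hp | hp
      · -- parent tu = tv
        have hs : tu ≠ root := by
          rintro rfl
          rw [hroot] at hp
          exact h hp
        exact key tu u v' huv hu hs (by rwa [hp])
      · -- parent tv = tu
        have hs : tv ≠ root := by
          rintro rfl
          rw [hroot] at hp
          exact h hp.symm
        obtain ⟨a, h1, h2⟩ := key tv v' u huv.symm hv hs (by rwa [hp])
        exact ⟨a, h2, h1⟩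
  -- bag connectivity
  have hbagConn : ∀ v : V, (T'.induce {a | v ∈ B a}).Connected := by
    intro v
    obtain ⟨tv, hv⟩ := hcover v
    set A : Set (Σ t, (D t).ι) := {a | v ∈ B a} with hAdef
    have hAmem : ∀ (t : ι) (hvt : v ∈ Vt t) (j : (D t).ι),
        (⟨v, hvt⟩ : ↑(Vt t)) ∈ (D t).bag j → (⟨t, j⟩ : Σ t, (D t).ι) ∈ A :=
      fun t hvt j hj => Set.mem_union_left _ ⟨_, hj, rfl⟩
    obtain ⟨⟨j0, hj0⟩⟩ := ((D tv).bagConn ⟨v, hv⟩).nonempty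
    rw [connected_iff]
    refine ⟨?_, ⟨⟨⟨tv, j0⟩, hAmem tv hv j0 hj0⟩⟩⟩
    -- within a fully-contained component
    have hwithin : ∀ (t : ι) (hall : ∀ j : (D t).ι, (⟨t, j⟩ : Σ t, (D t).ι) ∈ A)
        (n : ℕ) (i : (D t).ι), (p t)^[n] i = r t →
        (T'.induce A).Reachable ⟨⟨t, i⟩, hall i⟩ ⟨⟨t, r t⟩, hall _⟩ := by
      intro t hall n
      induction n with
      | zero =>
        intro i hi
        simp only [Function.iterate_zero_apply] at hi
        subst hi
        exact Reachable.refl _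
      | succ n ih =>
        intro i hi
        by_cases h : i = r t
        · subst h; exact Reachable.refl _
        · have hne2 : p t i ≠ i := by
            intro he
            exact h ((Function.iterate_fixed he (n+1)).symm.trans hi)
          have hadjT : T'.Adj ⟨t, i⟩ ⟨t, p t i⟩ := (pGraph_adj P _ _).2
            ⟨fun hc => hne2 (sigma_snd_eq hc).symm, Or.inl (hPstep t i h)⟩
          have hindadj : (T'.induce A).Adj ⟨⟨t, i⟩, hall i⟩ ⟨⟨t, p t i⟩, hall _⟩ := hadjT
          exact hindadj.reachable.trans (ih (p t i) (by rwa [← Function.iterate_succ_apply]))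
    -- every node of A reaches a base node in the component of v
    have hbase : ∀ a : ↥A, ∃ (t' : ι) (j : (D t').ι) (hvt' : v ∈ Vt t')
        (hj : (⟨v, hvt'⟩ : ↑(Vt t')) ∈ (D t').bag j),
        (T'.induce A).Reachable a ⟨⟨t', j⟩, hAmem t' hvt' j hj⟩ := by
      rintro ⟨⟨t, i⟩, ha⟩
      have ha' : v ∈ B ⟨t, i⟩ := ha
      rw [hBdef, Set.mem_union] at ha'
      rcases ha' with ⟨⟨v1, hv1⟩, hb, hveq⟩ | hright
      · obtain rfl : v1 = v := hveq
        exact ⟨t, i, hv1, hb, Reachable.refl _⟩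
      · by_cases ht : t = root
        · rw [dif_pos ht] at hright
          exact absurd hright (Set.notMem_empty _)
        · rw [dif_neg ht] at hright
          obtain ⟨⟨v1, hv2⟩, hb, hveq⟩ := hright
          obtain rfl : v1 = v := hveq
          have hall : ∀ j : (D t).ι, (⟨t, j⟩ : Σ t, (D t).ι) ∈ A := by
            intro j
            have hmem : v1 ∈ B ⟨t, j⟩ := by
              rw [hBdef, Set.mem_union]
              right
              dsimp only
              rw [dif_neg ht]
              exact ⟨_, hb, rfl⟩
            exact hmem
          obtain ⟨n, hn⟩ := hreach t i
          have hr1 := hwithin t hall n i hn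
          have hadjup : T'.Adj ⟨t, r t⟩ ⟨parent t, pt t ht⟩ := (pGraph_adj P _ _).2
            ⟨fun hc => hparent_ne t ht (congrArg Sigma.fst hc).symm, Or.inl (hPup t ht)⟩
          have hup : (T'.induce A).Adj ⟨⟨t, r t⟩, hall _⟩
              ⟨⟨parent t, pt t ht⟩, hAmem (parent t) hv2 (pt t ht) hb⟩ := hadjup
          exact ⟨parent t, pt t ht, hv2, hb, hr1.trans hup.reachable⟩
    -- connection within the component of v
    have hsame : ∀ (t' : ι) (hvt' : v ∈ Vt t') (j1 j2 : (D t').ι)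
        (h1 : (⟨v, hvt'⟩ : ↑(Vt t')) ∈ (D t').bag j1)
        (h2 : (⟨v, hvt'⟩ : ↑(Vt t')) ∈ (D t').bag j2),
        (T'.induce A).Reachable ⟨⟨t', j1⟩, hAmem t' hvt' j1 h1⟩ ⟨⟨t', j2⟩, hAmem t' hvt' j2 h2⟩ := by
      intro t' hvt' j1 j2 h1 h2
      have hconn := (D t').bagConn ⟨v, hvt'⟩
      have hrch := hconn.preconnected ⟨j1, h1⟩ ⟨j2, h2⟩
      refine Reachable.map
        (⟨fun j => ⟨⟨t', j.1⟩, hAmem t' hvt' j.1 j.2⟩, ?_⟩ :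
          ((D t').T.induce {j | (⟨v, hvt'⟩ : ↑(Vt t')) ∈ (D t').bag j}) →g (T'.induce A)) hrch
      intro a b hab
      have hab' : (D t').T.Adj a.1 b.1 := hab
      show T'.Adj ⟨t', a.1⟩ ⟨t', b.1⟩
      rw [pGraph_adj]
      refine ⟨fun hc => hab'.ne (sigma_snd_eq hc), ?_⟩
      rcases hTadj t' a.1 b.1 hab' with hp1 | hp1
      · left
        have har : a.1 ≠ r t' := by
          intro he
          apply hab'.ne
          rw [← hp1, he, hpr]
        rw [hPstep t' a.1 har, hp1]
      · right
        have hbr : b.1 ≠ r t' := by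
          intro he
          apply hab'.ne.symm
          rw [← hp1, he, hpr]
        rw [hPstep t' b.1 hbr, hp1]
    intro a b
    obtain ⟨t1, j1, hvt1, hj1, hr1⟩ := hbase a
    obtain ⟨t2, j2, hvt2, hj2, hr2⟩ := hbase b
    have ht12 : t1 = t2 := huniq hvt1 hvt2
    subst ht12
    exact hr1.trans ((hsame t1 hvt1 j1 j2 hj1 hj2).trans hr2.symm)
  exact ⟨⟨Σ t, (D t).ι, T', pGraph_connected P R hreachP, pGraph_acyclic P R hPR hreachP,
    B, hcoverB, hbagConn⟩, hBwidth⟩
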